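/- If the order conditions for an s-stage SARK method up to third order hold (Σbᵢ=1; 2Σbᵢa_{ij}=1; 2Σbᵢd_{ij}=1; and the seven third-order conditions), and Ã, M̃₁: ℝ^m → ℝ^m are three times continuously differentiable, then the exact flow Y(τ) and the discrete SARK output Y_τ agree at τ=0 together with their first, second, and third derivatives: Y_τ(0)=Y(0), Y_τ'(0)=Y'(0), Y_τ''(0)=Y''(0), Y_τ'''(0)=Y'''(0); consequently Y(τ) − Y_τ = O(τ⁴) as τ → 0. -/

import Mathlib

/-!
Write `Y_τ = Y₀ + τ g(τ)` with `g(τ) = ∑ᵢ bᵢ Ã(Zᵢ(τ))`. Leibniz' rule gives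
`Y_τ^(k+1)(0) = (k+1) g^(k)(0)`, while `Y^(k+1) = (Ã ∘ Z)^(k)`. Both sides are expanded by the
chain rule (Faà di Bruno to order two) into the elementary differentials `Ã'`, `Ã''`, `M̃₁'` at
`Y₀` applied to `Ã(Y₀)` and `M̃₁(Y₀)`, and the order conditions are exactly the identities between
their coefficients. Taylor's theorem for `Y` at order four and for `g` at order three then turns the
agreement of the first three derivatives into the `O(τ⁴)` bound.
-/

open Filter Asymptotics Topology

section Calculus

variable {E F : Type*} [NormedAddCommGroup E] [NormedSpace ℝ E]
  [NormedAddCommGroup F] [NormedSpace ℝ F]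

theorem fderiv_fun_comp_deriv {l : E → F} {f : ℝ → E} {x : ℝ}
    (hl : DifferentiableAt ℝ l (f x)) (hf : DifferentiableAt ℝ f x) :
    deriv (fun τ => l (f τ)) x = fderiv ℝ l (f x) (deriv f x) :=
  fderiv_comp_deriv x hl hf

theorem iteratedDeriv_two_fun_comp {l : E → F} {f : ℝ → E} (hl : ContDiff ℝ 2 l)
    (hf : ContDiff ℝ 2 f) (x : ℝ) :
    iteratedDeriv 2 (fun τ => l (f τ)) x
      = fderiv ℝ (fderiv ℝ l) (f x) (deriv f x) (deriv f x)
        + fderiv ℝ l (f x) (iteratedDeriv 2 f x) := by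
  rw [show (fun τ => l (f τ)) = l ∘ f from rfl,
    iteratedDeriv_vcomp_two hl.contDiffAt hf.contDiffAt, iteratedFDeriv_two_apply]

theorem iteratedDeriv_fun_sum_smul {ι : Type*} (S : Finset ι) (c : ι → ℝ) {f : ι → ℝ → E}
    {n : ℕ} {x : ℝ} (hf : ∀ i ∈ S, ContDiffAt ℝ n (f i) x) :
    iteratedDeriv n (fun τ => ∑ i ∈ S, c i • f i τ) x = ∑ i ∈ S, c i • iteratedDeriv n (f i) x := by
  rw [iteratedDeriv_fun_sum fun i hi => (hf i hi).const_smul (c i)]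
  exact Finset.sum_congr rfl fun i hi => iteratedDeriv_const_smul (hf i hi) (c i)

theorem iteratedDeriv_succ_smul_id_zero {n : ℕ} {g : ℝ → E} (hg : ContDiffAt ℝ (n + 1) g 0) :
    iteratedDeriv (n + 1) (fun τ => τ • g τ) 0 = (n + 1 : ℝ) • iteratedDeriv n g 0 := by
  have h := iteratedDerivWithin_smul (Set.mem_univ (0 : ℝ)) uniqueDiffOn_univ
    (f := fun τ : ℝ => τ) (by fun_prop) hg.contDiffWithinAt
  simp only [iteratedDerivWithin_univ] at h
  rw [show (fun τ => τ • g τ) = (fun τ : ℝ => τ) • g from rfl, h, Finset.sum_range_succ',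
    Finset.sum_range_succ']
  simp [iteratedDeriv_fun_id_zero, ← Nat.cast_smul_eq_nsmul ℝ]

theorem iteratedDeriv_succ_const_add_smul_id_zero {n : ℕ} {g : ℝ → E}
    (hg : ContDiffAt ℝ (n + 1) g 0) (c : E) :
    iteratedDeriv (n + 1) (fun τ => c + τ • g τ) 0 = (n + 1 : ℝ) • iteratedDeriv n g 0 := by
  rw [iteratedDeriv_const_add n.succ_pos, iteratedDeriv_succ_smul_id_zero hg]

theorem taylorWithinEval_univ_sub_const_add_smul {n : ℕ} {f g : ℝ → E}
    (hfg : ∀ k < n, iteratedDeriv (k + 1) f 0 = (k + 1 : ℝ) • iteratedDeriv k g 0) (τ : ℝ) :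
    taylorWithinEval f (n + 1) Set.univ 0 τ - (f 0 + τ • taylorWithinEval g n Set.univ 0 τ)
      = τ ^ (n + 1) • (((n + 1).factorial : ℝ)⁻¹ • iteratedDeriv (n + 1) f 0
          - (n.factorial : ℝ)⁻¹ • iteratedDeriv n g 0) := by
  set e : ℕ → E := fun k => ((k + 1).factorial : ℝ)⁻¹ • iteratedDeriv (k + 1) f 0
    - (k.factorial : ℝ)⁻¹ • iteratedDeriv k g 0
  have he : ∀ k < n, e k = 0 := fun k hk => by
    simp only [e, hfg k hk, smul_smul, Nat.factorial_succ, Nat.cast_mul, sub_eq_zero]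
    congr 1
    push_cast
    field_simp
  calc _ = ∑ k ∈ Finset.range (n + 1), τ ^ (k + 1) • e k := by
        simp only [taylor_within_apply, iteratedDerivWithin_univ, sub_zero, e, smul_sub,
          Finset.sum_sub_distrib, Finset.smul_sum, smul_smul]
        rw [Finset.sum_range_succ']
        simp only [pow_zero, Nat.factorial_zero, Nat.cast_one, inv_one, mul_one, one_smul,
          iteratedDeriv_zero, pow_succ]
        rw [add_comm _ (f 0), add_sub_add_left_eq_sub]
        congr 1 <;> refine Finset.sum_congr rfl fun k _ => ?_ <;> congr 1 <;> ring
    _ = τ ^ (n + 1) • e n := by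
        rw [Finset.sum_range_succ, Finset.sum_eq_zero fun k hk => by
          rw [he k (Finset.mem_range.mp hk), smul_zero], zero_add]

theorem isBigO_sub_const_add_smul_of_iteratedDeriv_succ {n : ℕ} {f g : ℝ → E}
    (hf : ContDiff ℝ (n + 1) f) (hg : ContDiff ℝ n g)
    (hfg : ∀ k < n, iteratedDeriv (k + 1) f 0 = (k + 1 : ℝ) • iteratedDeriv k g 0) :
    (fun τ => f τ - (f 0 + τ • g τ)) =O[𝓝 0] fun τ => τ ^ (n + 1) := by
  have hTf := taylor_isLittleO_univ (x₀ := 0) (by exact_mod_cast hf)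
  have hTg := (isBigO_refl (fun τ : ℝ => τ) (𝓝 0)).smul
    (taylor_isLittleO_univ (x₀ := 0) hg).isBigO
  have hpoly := (isBigO_refl (fun τ : ℝ => τ ^ (n + 1)) (𝓝 0)).smul
    (isBigO_const_const (((n + 1).factorial : ℝ)⁻¹ • iteratedDeriv (n + 1) f 0
      - (n.factorial : ℝ)⁻¹ • iteratedDeriv n g 0) (one_ne_zero (α := ℝ)) (𝓝 (0 : ℝ)))
  simp only [sub_zero, smul_eq_mul, ← pow_succ', mul_one] at hTf hTg hpoly
  have hdecomp : (fun τ => f τ - (f 0 + τ • g τ)) = fun τ =>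
      (f τ - taylorWithinEval f (n + 1) Set.univ 0 τ)
        - τ • (g τ - taylorWithinEval g n Set.univ 0 τ)
        + (taylorWithinEval f (n + 1) Set.univ 0 τ
          - (f 0 + τ • taylorWithinEval g n Set.univ 0 τ)) := by
    funext τ
    rw [smul_sub]
    abel
  rw [hdecomp]
  simp only [taylorWithinEval_univ_sub_const_add_smul hfg]
  exact (hTf.isBigO.sub hTg).add hpoly

end Calculus

section OrderConditions

variable {E : Type*} [NormedAddCommGroup E] [NormedSpace ℝ E]
  {s : ℕ} {b : Fin s → ℝ} {a d : Fin s → Fin s → ℝ}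

theorem order_two_conditions_match (L : E →L[ℝ] E) (P Q : E)
    (h2a : 2 * ∑ i, ∑ j ∈ Finset.Iio i, b i * a i j = 1)
    (h2d : 2 * ∑ i, ∑ j ∈ Finset.Iio i, b i * d i j = 1) :
    (2 : ℝ) • ∑ i, b i • L ((∑ j ∈ Finset.Iio i, d i j) • P + (∑ j ∈ Finset.Iio i, a i j) • Q)
      = L (Q + P) := by
  simp only [map_add, map_smul, smul_add, smul_smul, Finset.sum_add_distrib, ← Finset.sum_smul]
  simp only [← Finset.mul_sum] at h2a h2d
  match_scalars <;> linarith

/-- `v i` stands for the stage velocity `Zᵢ'(0)`, `P` for `M̃₁(Y₀)` and `Q` for `Ã(Y₀)`. -/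
theorem order_three_conditions_match (L N : E →L[ℝ] E)
    (B : E →L[ℝ] E →L[ℝ] E) (P Q : E) (v : Fin s → E)
    (hv : ∀ i, v i = (∑ j ∈ Finset.Iio i, d i j) • P + (∑ j ∈ Finset.Iio i, a i j) • Q)
    (h3a : 3 * ∑ i, b i * (∑ j ∈ Finset.Iio i, a i j)^2 = 1)
    (h3d : 3 * ∑ i, b i * (∑ j ∈ Finset.Iio i, d i j)^2 = 1)
    (h3ad : 3 * ∑ i, b i * (∑ j ∈ Finset.Iio i, a i j) * (∑ j ∈ Finset.Iio i, d i j) = 1)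
    (h3aa : 6 * ∑ i, ∑ j ∈ Finset.Iio i, ∑ k ∈ Finset.Iio j, b i * a i j * a j k = 1)
    (h3adk : 6 * ∑ i, ∑ j ∈ Finset.Iio i, ∑ k ∈ Finset.Iio j, b i * a i j * d j k = 1)
    (h3da : 3 * ∑ i, ∑ j ∈ Finset.Iio i, ∑ k ∈ Finset.Iio j, b i * d i j * a j k = 1)
    (h3dd : 3 * ∑ i, ∑ j ∈ Finset.Iio i, ∑ k ∈ Finset.Iio j, b i * d i j * d j k = 1) :
    (3 : ℝ) • ∑ i, b i • (B (v i) (v i)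
        + L ((2 : ℝ) • ∑ j ∈ Finset.Iio i, (d i j • N (v j) + a i j • L (v j))))
      = B (Q + P) (Q + P) + L (L (Q + P) + (2 : ℝ) • N (Q + P)) := by
  simp only [hv, map_add, map_smul, add_apply, smul_apply, smul_add, smul_smul,
    Finset.sum_add_distrib, ← Finset.sum_smul]
  -- one normal form for the coefficients and the order conditions, so that they share atoms
  simp only [mul_assoc, mul_left_comm _ (2 : ℝ), pow_two, ← Finset.mul_sum,
    mul_comm (∑ j ∈ Finset.Iio _, d _ j) (∑ j ∈ Finset.Iio _, a _ j)]
    at h3a h3d h3ad h3aa h3adk h3da h3dd ⊢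
  match_scalars <;> linarith

end OrderConditions

section ExactFlow

variable {E : Type*} [NormedAddCommGroup E] [NormedSpace ℝ E]
  {A M : E → E} {Z Y : ℝ → E} {Y₀ : E}

theorem exactAux_deriv_zero (hM : ContDiff ℝ 1 M) (hZ : ContDiff ℝ 1 Z)
    (hodeZ : ∀ t, deriv Z t = A (Z t) + deriv (fun u => u • M (Z u)) t) (hZ0 : Z 0 = Y₀) :
    deriv Z 0 = A Y₀ + M Y₀ := by
  have h := iteratedDeriv_succ_smul_id_zero (n := 0) (g := fun u => M (Z u))
    (hM.comp hZ).contDiffAt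
  simp only [zero_add, iteratedDeriv_one, iteratedDeriv_zero, Nat.cast_zero, one_smul] at h
  rw [hodeZ, h, hZ0]

theorem exactAux_iteratedDeriv_two_zero (hA : ContDiff ℝ 1 A) (hM : ContDiff ℝ 2 M)
    (hZ : ContDiff ℝ 2 Z)
    (hodeZ : ∀ t, deriv Z t = A (Z t) + deriv (fun u => u • M (Z u)) t) (hZ0 : Z 0 = Y₀) :
    iteratedDeriv 2 Z 0
      = fderiv ℝ A Y₀ (A Y₀ + M Y₀) + (2 : ℝ) • fderiv ℝ M Y₀ (A Y₀ + M Y₀) := by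
  have hMZ : ContDiff ℝ 2 (fun u => u • M (Z u)) := contDiff_id.smul (hM.comp hZ)
  have hZd := hZ.differentiable two_ne_zero 0
  rw [iteratedDeriv_succ', show deriv Z = _ from funext hodeZ,
    iteratedDeriv_fun_add (f := fun t => A (Z t)) (hA.comp (hZ.of_le one_le_two)).contDiffAt
      (hMZ.deriv' (n := 1)).contDiffAt, ← iteratedDeriv_succ',
    iteratedDeriv_succ_smul_id_zero (g := fun u => M (Z u)) (hM.comp hZ).contDiffAt, iteratedDeriv_one,
    iteratedDeriv_one, fderiv_fun_comp_deriv (hA.differentiable one_ne_zero _) hZd,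
    fderiv_fun_comp_deriv (hM.differentiable two_ne_zero _) hZd,
    exactAux_deriv_zero (hM.of_le one_le_two) (hZ.of_le one_le_two) hodeZ hZ0, hZ0]
  norm_num

theorem exactFlow_iteratedDeriv_two_zero (hA : ContDiff ℝ 1 A) (hM : ContDiff ℝ 1 M)
    (hZ : ContDiff ℝ 1 Z)
    (hodeZ : ∀ t, deriv Z t = A (Z t) + deriv (fun u => u • M (Z u)) t)
    (hodeY : ∀ t, deriv Y t = A (Z t)) (hZ0 : Z 0 = Y₀) :
    iteratedDeriv 2 Y 0 = fderiv ℝ A Y₀ (A Y₀ + M Y₀) := by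
  rw [iteratedDeriv_succ', iteratedDeriv_one, show deriv Y = _ from funext hodeY,
    fderiv_fun_comp_deriv (hA.differentiable one_ne_zero _) (hZ.differentiable one_ne_zero _),
    exactAux_deriv_zero hM hZ hodeZ hZ0, hZ0]

theorem exactFlow_iteratedDeriv_three_zero (hA : ContDiff ℝ 2 A) (hM : ContDiff ℝ 2 M)
    (hZ : ContDiff ℝ 2 Z)
    (hodeZ : ∀ t, deriv Z t = A (Z t) + deriv (fun u => u • M (Z u)) t)
    (hodeY : ∀ t, deriv Y t = A (Z t)) (hZ0 : Z 0 = Y₀) :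
    iteratedDeriv 3 Y 0
      = fderiv ℝ (fderiv ℝ A) Y₀ (A Y₀ + M Y₀) (A Y₀ + M Y₀)
        + fderiv ℝ A Y₀ (fderiv ℝ A Y₀ (A Y₀ + M Y₀) + (2 : ℝ) • fderiv ℝ M Y₀ (A Y₀ + M Y₀)) := by
  rw [iteratedDeriv_succ', show deriv Y = _ from funext hodeY, iteratedDeriv_two_fun_comp hA hZ,
    exactAux_deriv_zero (hM.of_le one_le_two) (hZ.of_le one_le_two) hodeZ hZ0,
    exactAux_iteratedDeriv_two_zero (hA.of_le one_le_two) hM hZ hodeZ hZ0, hZ0]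

end ExactFlow

section Stages

variable {E : Type*} [NormedAddCommGroup E] [NormedSpace ℝ E]
  {s : ℕ} {A M : E → E} {Y₀ : E} {a d : Fin s → Fin s → ℝ} {Zs : Fin s → ℝ → E}

theorem contDiff_of_explicit_stages {n : WithTop ℕ∞} {F : Fin s → Fin s → E → E}
    (hF : ∀ i j, ContDiff ℝ n (F i j))
    (hZs : ∀ i τ, Zs i τ = Y₀ + τ • ∑ j ∈ Finset.Iio i, F i j (Zs j τ)) (i : Fin s) :
    ContDiff ℝ n (Zs i) := by
  induction i using WellFoundedLT.induction with
  | ind i ih =>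
    rw [show Zs i = _ from funext (hZs i)]
    exact contDiff_const.add (contDiff_id.smul (ContDiff.sum fun j hj =>
      (hF i j).comp (ih j (Finset.mem_Iio.mp hj))))

theorem sarkStage_contDiff {n : WithTop ℕ∞} (hA : ContDiff ℝ n A) (hM : ContDiff ℝ n M)
    (hZs : ∀ i τ, Zs i τ
      = Y₀ + τ • ∑ j ∈ Finset.Iio i, (d i j • M (Zs j τ) + a i j • A (Zs j τ)))
    (i : Fin s) : ContDiff ℝ n (Zs i) :=
  contDiff_of_explicit_stages (F := fun i j x => d i j • M x + a i j • A x)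
    (fun _ _ => (contDiff_const.smul hM).add (contDiff_const.smul hA)) hZs i

theorem sarkStage_zero
    (hZs : ∀ i τ, Zs i τ
      = Y₀ + τ • ∑ j ∈ Finset.Iio i, (d i j • M (Zs j τ) + a i j • A (Zs j τ)))
    (i : Fin s) : Zs i 0 = Y₀ := by
  simp [hZs i 0]

theorem sarkStage_deriv_zero (hA : ContDiff ℝ 1 A) (hM : ContDiff ℝ 1 M)
    (hZs : ∀ i τ, Zs i τ
      = Y₀ + τ • ∑ j ∈ Finset.Iio i, (d i j • M (Zs j τ) + a i j • A (Zs j τ)))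
    (i : Fin s) :
    deriv (Zs i) 0 = (∑ j ∈ Finset.Iio i, d i j) • M Y₀ + (∑ j ∈ Finset.Iio i, a i j) • A Y₀ := by
  have hS : ContDiff ℝ 1 fun τ => ∑ j ∈ Finset.Iio i, (d i j • M (Zs j τ) + a i j • A (Zs j τ)) :=
    ContDiff.sum fun j _ => (contDiff_const.smul (hM.comp (sarkStage_contDiff hA hM hZs j))).add
      (contDiff_const.smul (hA.comp (sarkStage_contDiff hA hM hZs j)))
  have h := iteratedDeriv_succ_const_add_smul_id_zero (n := 0) hS.contDiffAt Y₀
  simp only [zero_add, iteratedDeriv_one, iteratedDeriv_zero, Nat.cast_zero, one_smul] at h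
  rw [show Zs i = _ from funext (hZs i), h]
  simp only [sarkStage_zero hZs, Finset.sum_add_distrib, Finset.sum_smul]

theorem sarkStage_iteratedDeriv_two_zero (hA : ContDiff ℝ 2 A) (hM : ContDiff ℝ 2 M)
    (hZs : ∀ i τ, Zs i τ
      = Y₀ + τ • ∑ j ∈ Finset.Iio i, (d i j • M (Zs j τ) + a i j • A (Zs j τ)))
    (i : Fin s) :
    iteratedDeriv 2 (Zs i) 0 = (2 : ℝ) • ∑ j ∈ Finset.Iio i,
      (d i j • fderiv ℝ M Y₀ (deriv (Zs j) 0) + a i j • fderiv ℝ A Y₀ (deriv (Zs j) 0)) := by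
  have hZsC := sarkStage_contDiff hA hM hZs
  have hcomp : ∀ {F : E → E}, ContDiff ℝ 2 F → ∀ j,
      HasDerivAt (fun τ => F (Zs j τ)) (fderiv ℝ F Y₀ (deriv (Zs j) 0)) 0 := fun hF j =>
    (hF.differentiable two_ne_zero Y₀).hasFDerivAt.comp_hasDerivAt_of_eq 0
      ((hZsC j).differentiable two_ne_zero 0).hasDerivAt (sarkStage_zero hZs j).symm
  have hS : ContDiff ℝ 2 fun τ => ∑ j ∈ Finset.Iio i, (d i j • M (Zs j τ) + a i j • A (Zs j τ)) :=
    ContDiff.sum fun j _ => (contDiff_const.smul (hM.comp (hZsC j))).add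
      (contDiff_const.smul (hA.comp (hZsC j)))
  rw [show Zs i = _ from funext (hZs i),
    iteratedDeriv_succ_const_add_smul_id_zero (n := 1) hS.contDiffAt, iteratedDeriv_one,
    (HasDerivAt.fun_sum fun j _ => ((hcomp hM j).fun_const_smul (d i j)).fun_add
      ((hcomp hA j).fun_const_smul (a i j))).deriv]
  norm_num

end Stages

section Matching

variable {E : Type*} [NormedAddCommGroup E] [NormedSpace ℝ E]
  {s : ℕ} {A M : E → E} {Y₀ : E} {b : Fin s → ℝ} {a d : Fin s → Fin s → ℝ}
  {Zs : Fin s → ℝ → E} {Z Y : ℝ → E}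

theorem sarkIncrement_iteratedDeriv_one_zero (hA : ContDiff ℝ 1 A) (hM : ContDiff ℝ 1 M)
    (hZs : ∀ i τ, Zs i τ
      = Y₀ + τ • ∑ j ∈ Finset.Iio i, (d i j • M (Zs j τ) + a i j • A (Zs j τ))) :
    iteratedDeriv 1 (fun τ => ∑ i, b i • A (Zs i τ)) 0
      = ∑ i, b i • fderiv ℝ A Y₀ (deriv (Zs i) 0) := by
  have hZsC := sarkStage_contDiff hA hM hZs
  rw [iteratedDeriv_fun_sum_smul _ _ (f := fun i τ => A (Zs i τ))
    fun i _ => (hA.comp (hZsC i)).contDiffAt]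
  refine Finset.sum_congr rfl fun i _ => ?_
  rw [iteratedDeriv_one, fderiv_fun_comp_deriv (hA.differentiable one_ne_zero _)
    ((hZsC i).differentiable one_ne_zero 0), sarkStage_zero hZs]

theorem sarkIncrement_iteratedDeriv_two_zero (hA : ContDiff ℝ 2 A) (hM : ContDiff ℝ 2 M)
    (hZs : ∀ i τ, Zs i τ
      = Y₀ + τ • ∑ j ∈ Finset.Iio i, (d i j • M (Zs j τ) + a i j • A (Zs j τ))) :
    iteratedDeriv 2 (fun τ => ∑ i, b i • A (Zs i τ)) 0
      = ∑ i, b i • (fderiv ℝ (fderiv ℝ A) Y₀ (deriv (Zs i) 0) (deriv (Zs i) 0)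
          + fderiv ℝ A Y₀ (iteratedDeriv 2 (Zs i) 0)) := by
  have hZsC := sarkStage_contDiff hA hM hZs
  rw [iteratedDeriv_fun_sum_smul _ _ (f := fun i τ => A (Zs i τ))
    fun i _ => (hA.comp (hZsC i)).contDiffAt]
  refine Finset.sum_congr rfl fun i _ => ?_
  rw [iteratedDeriv_two_fun_comp hA (hZsC i), sarkStage_zero hZs]

theorem sark_iteratedDeriv_two_eq (hA : ContDiff ℝ 1 A) (hM : ContDiff ℝ 1 M)
    (hZ : ContDiff ℝ 1 Z)
    (hodeZ : ∀ t, deriv Z t = A (Z t) + deriv (fun u => u • M (Z u)) t)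
    (hodeY : ∀ t, deriv Y t = A (Z t)) (hZ0 : Z 0 = Y₀)
    (hZs : ∀ i τ, Zs i τ
      = Y₀ + τ • ∑ j ∈ Finset.Iio i, (d i j • M (Zs j τ) + a i j • A (Zs j τ)))
    (h2a : 2 * ∑ i, ∑ j ∈ Finset.Iio i, b i * a i j = 1)
    (h2d : 2 * ∑ i, ∑ j ∈ Finset.Iio i, b i * d i j = 1) :
    iteratedDeriv 2 Y 0 = (2 : ℝ) • iteratedDeriv 1 (fun τ => ∑ i, b i • A (Zs i τ)) 0 := by
  rw [exactFlow_iteratedDeriv_two_zero hA hM hZ hodeZ hodeY hZ0,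
    sarkIncrement_iteratedDeriv_one_zero hA hM hZs]
  simp only [sarkStage_deriv_zero hA hM hZs]
  exact (order_two_conditions_match _ _ _ h2a h2d).symm

theorem sark_iteratedDeriv_three_eq (hA : ContDiff ℝ 2 A) (hM : ContDiff ℝ 2 M)
    (hZ : ContDiff ℝ 2 Z)
    (hodeZ : ∀ t, deriv Z t = A (Z t) + deriv (fun u => u • M (Z u)) t)
    (hodeY : ∀ t, deriv Y t = A (Z t)) (hZ0 : Z 0 = Y₀)
    (hZs : ∀ i τ, Zs i τ
      = Y₀ + τ • ∑ j ∈ Finset.Iio i, (d i j • M (Zs j τ) + a i j • A (Zs j τ)))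
    (h3a : 3 * ∑ i, b i * (∑ j ∈ Finset.Iio i, a i j)^2 = 1)
    (h3d : 3 * ∑ i, b i * (∑ j ∈ Finset.Iio i, d i j)^2 = 1)
    (h3ad : 3 * ∑ i, b i * (∑ j ∈ Finset.Iio i, a i j) * (∑ j ∈ Finset.Iio i, d i j) = 1)
    (h3aa : 6 * ∑ i, ∑ j ∈ Finset.Iio i, ∑ k ∈ Finset.Iio j, b i * a i j * a j k = 1)
    (h3adk : 6 * ∑ i, ∑ j ∈ Finset.Iio i, ∑ k ∈ Finset.Iio j, b i * a i j * d j k = 1)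
    (h3da : 3 * ∑ i, ∑ j ∈ Finset.Iio i, ∑ k ∈ Finset.Iio j, b i * d i j * a j k = 1)
    (h3dd : 3 * ∑ i, ∑ j ∈ Finset.Iio i, ∑ k ∈ Finset.Iio j, b i * d i j * d j k = 1) :
    iteratedDeriv 3 Y 0 = (3 : ℝ) • iteratedDeriv 2 (fun τ => ∑ i, b i • A (Zs i τ)) 0 := by
  rw [exactFlow_iteratedDeriv_three_zero hA hM hZ hodeZ hodeY hZ0,
    sarkIncrement_iteratedDeriv_two_zero hA hM hZs]
  simp only [sarkStage_iteratedDeriv_two_zero hA hM hZs]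
  exact (order_three_conditions_match _ _ _ _ _ _
    (sarkStage_deriv_zero (hA.of_le one_le_two) (hM.of_le one_le_two) hZs)
    h3a h3d h3ad h3aa h3adk h3da h3dd).symm

end Matching

/-- Order conditions up to third order imply matching derivatives up to order 3
at τ = 0 and hence a fourth-order local error Y(τ) − Y_τ = O(τ⁴). -/
theorem stmt19 {m s : ℕ}
    (A M1 : (Fin m → ℝ) → (Fin m → ℝ)) (Y₀ : Fin m → ℝ)
    (b : Fin s → ℝ) (a d : Fin s → Fin s → ℝ)
    (Z Y : ℝ → (Fin m → ℝ))
    (Zs : Fin s → ℝ → (Fin m → ℝ)) (Yt : ℝ → (Fin m → ℝ))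
    (hA : ContDiff ℝ 3 A) (hM : ContDiff ℝ 3 M1)
    (hZ : ContDiff ℝ 4 Z) (hY : ContDiff ℝ 4 Y)
    (hodeZ : ∀ t : ℝ, deriv Z t = A (Z t) + deriv (fun u => u • M1 (Z u)) t)
    (hodeY : ∀ t : ℝ, deriv Y t = A (Z t))
    (hZ0 : Z 0 = Y₀) (hY0 : Y 0 = Y₀)
    (hZs : ∀ i τ, Zs i τ
      = Y₀ + τ • ∑ j ∈ Finset.Iio i, (d i j • M1 (Zs j τ) + a i j • A (Zs j τ)))
    (hYt : ∀ τ, Yt τ = Y₀ + τ • ∑ i, b i • A (Zs i τ))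
    (hb : ∑ i, b i = 1)
    (h2a : 2 * ∑ i, ∑ j ∈ Finset.Iio i, b i * a i j = 1)
    (h2d : 2 * ∑ i, ∑ j ∈ Finset.Iio i, b i * d i j = 1)
    (h3a : 3 * ∑ i, b i * (∑ j ∈ Finset.Iio i, a i j)^2 = 1)
    (h3d : 3 * ∑ i, b i * (∑ j ∈ Finset.Iio i, d i j)^2 = 1)
    (h3ad : 3 * ∑ i, b i * (∑ j ∈ Finset.Iio i, a i j) * (∑ j ∈ Finset.Iio i, d i j) = 1)
    (h3aa : 6 * ∑ i, ∑ j ∈ Finset.Iio i, ∑ k ∈ Finset.Iio j, b i * a i j * a j k = 1)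
    (h3adk : 6 * ∑ i, ∑ j ∈ Finset.Iio i, ∑ k ∈ Finset.Iio j, b i * a i j * d j k = 1)
    (h3da : 3 * ∑ i, ∑ j ∈ Finset.Iio i, ∑ k ∈ Finset.Iio j, b i * d i j * a j k = 1)
    (h3dd : 3 * ∑ i, ∑ j ∈ Finset.Iio i, ∑ k ∈ Finset.Iio j, b i * d i j * d j k = 1) :
    Yt 0 = Y 0
    ∧ deriv Yt 0 = deriv Y 0
    ∧ iteratedDeriv 2 Yt 0 = iteratedDeriv 2 Y 0
    ∧ iteratedDeriv 3 Yt 0 = iteratedDeriv 3 Y 0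
    ∧ (fun τ : ℝ => Y τ - Yt τ) =O[𝓝 0] (fun τ : ℝ => τ^4) := by
  set g := fun τ => ∑ i, b i • A (Zs i τ)
  have hYtg : Yt = fun τ => Y₀ + τ • g τ := funext hYt
  have hZsC := sarkStage_contDiff hA hM hZs
  have hgC : ContDiff ℝ 3 g := ContDiff.sum fun i _ => by fun_prop
  have hmatch : ∀ k < 3, iteratedDeriv (k + 1) Y 0 = (k + 1 : ℝ) • iteratedDeriv k g 0 := by
    intro k hk
    interval_cases k
    · simp [g, iteratedDeriv_one, hodeY, hZ0, sarkStage_zero hZs, ← Finset.sum_smul, hb]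
    · exact_mod_cast sark_iteratedDeriv_two_eq (hA.of_le (by norm_num)) (hM.of_le (by norm_num))
        (hZ.of_le (by norm_num)) hodeZ hodeY hZ0 hZs h2a h2d
    · exact_mod_cast sark_iteratedDeriv_three_eq (hA.of_le (by norm_num)) (hM.of_le (by norm_num))
        (hZ.of_le (by norm_num)) hodeZ hodeY hZ0 hZs
        h3a h3d h3ad h3aa h3adk h3da h3dd
  have hderiv : ∀ k < 3, iteratedDeriv (k + 1) Yt 0 = iteratedDeriv (k + 1) Y 0 := fun k hk => by
    rw [hYtg, iteratedDeriv_succ_const_add_smul_id_zero ((hgC.of_le _).contDiffAt), hmatch k hk]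
    exact_mod_cast hk
  refine ⟨by rw [hYt, hY0, zero_smul, add_zero], by simpa using hderiv 0 (by norm_num),
    hderiv 1 (by norm_num), hderiv 2 (by norm_num), ?_⟩
  refine (isBigO_sub_const_add_smul_of_iteratedDeriv_succ hY hgC hmatch).congr_left fun τ => ?_
  rw [hYt, hY0]
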